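/- arXiv:1502.00573 — 2 statements merged into one kernel-verified Lean document; each statement's English description precedes it below -/
import Mathlib

section
/- Let X be a locally compact metric space such that C₀(X) is infinite-dimensional and X has no isolated points. Then there exists f ∈ C₀(X) with 0 ≤ f ≤ 1 whose range contains the full interval [0,1] (equivalently, a positive contraction in C₀(X) with spectrum equal to [0,1]). -/
/-!
Since `X` has no isolated points, the closure of the interior of a compact neighbourhood is a
nonempty perfect compact metric space, so it contains a copy of the Cantor space `ℕ → Bool`.
Binary expansion maps the Cantor space continuously onto `[0, 1]`; by Tietze this map extends
from the (closed) copy to `X`, and multiplying by a compactly supported Urysohn function equal to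
`1` on the copy gives the required element of `C₀(X, ℝ)`.
-/

open Set Topology Function
open scoped ZeroAtInfty

theorem nonempty_of_not_finiteDimensional_zeroAtInfty {X 𝕜 : Type*} [TopologicalSpace X]
    [RCLike 𝕜] (h : ¬FiniteDimensional 𝕜 C₀(X, 𝕜)) : Nonempty X := by
  by_contra hX
  rw [not_nonempty_iff] at hX
  have : Subsingleton C₀(X, 𝕜) := ⟨fun f g => ZeroAtInftyContinuousMap.ext isEmptyElim⟩
  exact h inferInstance

theorem perfectSpace_of_forall_not_isOpen_singleton {X : Type*} [TopologicalSpace X]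
    (h : ∀ x : X, ¬IsOpen ({x} : Set X)) : PerfectSpace X :=
  perfectSpace_iff_forall_not_isolated.2 fun x =>
    ⟨fun hbot => h x ((isOpen_singleton_iff_punctured_nhds x).2 hbot)⟩

theorem Preperfect.perfectSpace {X : Type*} [TopologicalSpace X] {C : Set X}
    (hC : Preperfect C) : PerfectSpace C := by
  refine perfectSpace_iff_forall_not_isolated.2 fun x => ?_
  have himage : ((↑) '' ({x}ᶜ : Set C) : Set X) = {(x : X)}ᶜ ∩ C := by
    ext; simp [and_comm]
  rw [← Filter.map_neBot_iff Subtype.val, IsEmbedding.subtypeVal.map_nhdsWithin_eq, himage,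
    nhdsWithin_inter']
  exact hC x x.2

theorem exists_nat_bool_injection_of_locallyCompactSpace {X : Type*} [MetricSpace X]
    [LocallyCompactSpace X] [PerfectSpace X] [Nonempty X] :
    ∃ g : (ℕ → Bool) → X, Continuous g ∧ Injective g := by
  obtain ⟨x⟩ := ‹Nonempty X›
  obtain ⟨K, hK, hKx⟩ := exists_compact_mem_nhds x
  set C := closure (interior K)
  have : CompactSpace C := isCompact_iff_compactSpace.1 <|
    hK.of_isClosed_subset isClosed_closure (closure_minimal interior_subset hK.isClosed)
  have : PerfectSpace C := isOpen_interior.perfect_closure.acc.perfectSpace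
  have : Nonempty C := ⟨⟨x, subset_closure (mem_interior_iff_mem_nhds.2 hKx)⟩⟩
  obtain ⟨g, -, hgc, hgi⟩ :=
    (PerfectSpace.univ_perfect C).exists_nat_bool_injection univ_nonempty
  exact ⟨(↑) ∘ g, continuous_subtype_val.comp hgc, Subtype.val_injective.comp hgi⟩

theorem ZeroAtInftyContinuousMap.exists_extension_unitInterval {Y X : Type*}
    [TopologicalSpace Y] [CompactSpace Y] [TopologicalSpace X] [T2Space X] [NormalSpace X]
    [LocallyCompactSpace X] {e : Y → X} (he : Continuous e) (he_inj : Injective e)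
    (f : C(Y, unitInterval)) :
    ∃ F : C₀(X, ℝ), (∀ x, F x ∈ Icc (0 : ℝ) 1) ∧ ∀ y, F (e y) = f y := by
  obtain ⟨G, hG⟩ := f.exists_extension' (he.isClosedEmbedding he_inj)
  obtain ⟨φ, hφ, -, hφ_supp, hφ_mem⟩ := exists_continuous_one_zero_of_isCompact
    (isCompact_range he) isClosed_empty (disjoint_empty _)
  let F : C(X, ℝ) := φ * ⟨fun x => G x, by fun_prop⟩
  refine ⟨⟨F, hφ_supp.mul_right.is_zero_at_infty⟩, fun x => ?_, fun y => ?_⟩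
  · exact unitInterval.mul_mem (hφ_mem x) (G x).2
  · show φ (e y) * G (e y) = f y
    rw [hφ (mem_range_self y), Pi.one_apply, one_mul, ← comp_apply (f := G), hG]

theorem stmt1 {X : Type*} [MetricSpace X] [LocallyCompactSpace X]
    (hdim : ¬ FiniteDimensional ℂ C₀(X, ℂ))
    (hiso : ∀ x : X, ¬ IsOpen ({x} : Set X)) :
    ∃ f : C₀(X, ℝ), (∀ x, f x ∈ Set.Icc (0 : ℝ) 1) ∧
      Set.Icc (0 : ℝ) 1 ⊆ Set.range (fun x => f x) := by
  have : Nonempty X := nonempty_of_not_finiteDimensional_zeroAtInfty hdim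
  have : PerfectSpace X := perfectSpace_of_forall_not_isOpen_singleton hiso
  obtain ⟨g, hg, hg_inj⟩ := exists_nat_bool_injection_of_locallyCompactSpace (X := X)
  obtain ⟨f, hf_mem, hf_g⟩ := ZeroAtInftyContinuousMap.exists_extension_unitInterval hg hg_inj
    ⟨Real.fromBinary, Real.fromBinary_continuous⟩
  refine ⟨f, hf_mem, fun r hr => ?_⟩
  obtain ⟨b, hb⟩ := Real.fromBinary_surjective ⟨r, hr⟩
  exact ⟨g b, by simpa [hb] using hf_g b⟩
end

section
/- Let X be a connected compact metric space and f : X → [0,1] continuous with connected superlevel set U = {x : f(x) > 4/5}, and suppose the range of f is [0,1]. If a, b : X → [0,∞) are continuous with ‖f − a − b‖ < 1/10, ‖a‖ > 9/10 attained-style (∃s, a(s) > 9/10) with f(s) > 4/5 and b(s) < 1/5, and ∃t with b(t) > 9/10, f(t) > 4/5, a(t) < 1/5, then there exists x ∈ U with a(x) = b(x) > 7/20 and a(x)·b(x) > 1/10; in particular ‖a·b‖ ≥ 1/10, so one cannot also have ‖a·b‖ < 1/10. -/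
theorem stmt18 {X : Type*} [MetricSpace X] [CompactSpace X] [ConnectedSpace X]
    (f a b : C(X, ℝ))
    (hfrange : Set.range f = Set.Icc (0 : ℝ) 1)
    (hU : IsPreconnected {x | f x > 4 / 5})
    (hapos : ∀ x, 0 ≤ a x) (hbpos : ∀ x, 0 ≤ b x)
    (hfab : ‖f - a - b‖ < 1 / 10)
    (hs : ∃ s, a s > 9 / 10 ∧ f s > 4 / 5 ∧ b s < 1 / 5)
    (ht : ∃ t, b t > 9 / 10 ∧ f t > 4 / 5 ∧ a t < 1 / 5) :
    (∃ x, f x > 4 / 5 ∧ a x = b x ∧ a x > 7 / 20 ∧ a x * b x > 1 / 10) ∧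
      ‖a * b‖ ≥ 1 / 10 := by
  obtain ⟨s, has, hfs, hbs⟩ := hs
  obtain ⟨t, hbt, hft, hat⟩ := ht
  have hscont : ContinuousOn (fun x => a x - b x) {x | f x > 4 / 5} :=
    (a.continuous.sub b.continuous).continuousOn
  have hmem : (0 : ℝ) ∈ Set.Icc ((fun x => a x - b x) t) ((fun x => a x - b x) s) := by
    constructor <;> simp only [] <;> linarith
  have := hU.intermediate_value (a := t) (b := s) hft hfs hscont hmem
  obtain ⟨x, hxU, hx0⟩ := this
  have hxeq : a x = b x := by simpa [sub_eq_zero] using hx0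
  have hfx : f x > 4 / 5 := hxU
  have hnorm : |(f - a - b) x| ≤ ‖f - a - b‖ := (f - a - b).norm_coe_le_norm x
  have hval : |f x - a x - b x| < 1 / 10 := by
    simp only [ContinuousMap.sub_apply] at hnorm
    linarith [abs_nonneg (f x - a x - b x)]
  have habs := abs_lt.mp hval
  have hax : a x > 7 / 20 := by
    rw [hxeq] at habs ⊢
    linarith [habs.1]
  have hab : a x * b x > 1 / 10 := by
    rw [hxeq]
    nlinarith [hxeq ▸ hax]
  refine ⟨⟨x, hfx, hxeq, hax, hab⟩, ?_⟩
  have := (a * b).norm_coe_le_norm x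
  have h2 : |(a * b) x| = a x * b x := by
    simp [abs_of_nonneg (mul_nonneg (hapos x) (hbpos x))]
  rw [Real.norm_eq_abs, h2] at this
  linarith
end
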